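/- Let $M \sim \chi^2_p(\lambda)$ with c.d.f. $F_M$, and for $s > 1$ let $a(s) = F_M^{-1}(1/s)$ be the $1/s$-quantile. Then as $s \uparrow \infty$, $a(s) \sim \left(s^{-1} e^{\lambda/2} \, 2^{p/2} \, \Gamma(p/2+1)\right)^{2/p}$, i.e., the ratio tends to 1. -/

import Mathlib

open MeasureTheory Filter

/-- The c.d.f. of the chi-squared distribution with (real) degrees of freedom `d`. -/
noncomputable def chiSqCDF (d : ℝ) (a : ℝ) : ℝ :=
  ∫ x in (0:ℝ)..a, x ^ (d/2 - 1) * Real.exp (-x/2) / (2 ^ (d/2) * Real.Gamma (d/2))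

/-- The c.d.f. of the non-central chi-squared distribution `χ²_p(lam)`, via the
Poisson mixture representation. -/
noncomputable def ncChiSqCDF (p : ℕ) (lam : ℝ) (a : ℝ) : ℝ :=
  ∑' k : ℕ, Real.exp (-lam/2) * (lam/2) ^ k / (Nat.factorial k) * chiSqCDF ((p : ℝ) + 2 * k) a


/-!
Bounding the factor `exp (-t / 2)` of the density between `exp (-x / 2)` and `1` on `[0, x]`
squeezes `chiSqCDF d x` between `exp (-x / 2) * chiSqLeading d x` and `chiSqLeading d x`, and
`Γ(d/2 + k + 1) ≥ Γ(d/2 + 1)` gives `chiSqLeading (d + 2k) x ≤ chiSqLeading d x * (x / 2) ^ k`.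
Summing the Poisson mixture,
`exp (-x / 2) ≤ ncChiSqCDF p λ x / (exp (-λ / 2) * chiSqLeading p x) ≤ exp (λ x / 4)`,
so `ncChiSqCDF p λ x ~ exp (-λ / 2) * chiSqLeading p x` as `x → 0⁺`. As `ncChiSqCDF p λ` is
monotone and positive, `ncChiSqCDF p λ (a s) = 1 / s` forces `a s → 0⁺`. Writing the equivalence
as `ncChiSqCDF p λ x ~ x ^ (p / 2) / K` with `K = exp (λ / 2) * 2 ^ (p / 2) * Γ(p/2 + 1)` and
evaluating it at `x = a s` gives `s⁻¹ ~ a s ^ (p / 2) / K`, i.e. `a s ~ (K / s) ^ (2 / p)`.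
-/

open Set Topology

namespace Real

theorem Gamma_le_Gamma_add_nat {x : ℝ} (hx : 1 ≤ x) (n : ℕ) : Gamma x ≤ Gamma (x + n) := by
  induction n with
  | zero => simp
  | succ n ih =>
    have hxn : 1 ≤ x + n := le_add_of_le_of_nonneg hx n.cast_nonneg
    rw [Nat.cast_succ, ← add_assoc, Gamma_add_one (by positivity)]
    nlinarith [Gamma_pos_of_pos (by positivity : 0 < x + n)]

end Real

open Real

noncomputable def chiSqLeading (d x : ℝ) : ℝ :=
  x ^ (d / 2) / (2 ^ (d / 2) * Gamma (d / 2 + 1))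

section ChiSq

variable {d x : ℝ}

theorem chiSqLeading_pos (hd : 0 < d) (hx : 0 < x) : 0 < chiSqLeading d x := by
  have : 0 < Gamma (d / 2 + 1) := Gamma_pos_of_pos (by positivity)
  unfold chiSqLeading
  positivity

theorem intervalIntegrable_chiSqDensity (hd : 0 < d) (x : ℝ) :
    IntervalIntegrable (fun t => t ^ (d / 2 - 1) * exp (-t / 2)) volume 0 x :=
  (intervalIntegral.intervalIntegrable_rpow' (by linarith)).mul_continuousOn
    (by fun_prop)

theorem chiSqCDF_eq_integral_div :
    chiSqCDF d x =
      (∫ t in (0 : ℝ)..x, t ^ (d / 2 - 1) * exp (-t / 2)) / (2 ^ (d / 2) * Gamma (d / 2)) :=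
  intervalIntegral.integral_div _ _

theorem chiSqLeading_eq_integral_div (hd : 0 < d) :
    chiSqLeading d x = (∫ t in (0 : ℝ)..x, t ^ (d / 2 - 1)) / (2 ^ (d / 2) * Gamma (d / 2)) := by
  rw [integral_rpow (Or.inl (by linarith)), sub_add_cancel, zero_rpow (by positivity),
    sub_zero, chiSqLeading, Gamma_add_one (by positivity)]
  field_simp

theorem chiSqCDF_le_chiSqLeading (hd : 0 < d) (hx : 0 ≤ x) : chiSqCDF d x ≤ chiSqLeading d x := by
  rw [chiSqCDF_eq_integral_div, chiSqLeading_eq_integral_div hd]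
  have : 0 < Gamma (d / 2) := Gamma_pos_of_pos (by positivity)
  gcongr
  refine intervalIntegral.integral_mono_on hx (intervalIntegrable_chiSqDensity hd x)
    (intervalIntegral.intervalIntegrable_rpow' (by linarith)) fun t ht => ?_
  exact mul_le_of_le_one_right (rpow_nonneg ht.1 _) (exp_le_one_iff.2 (by linarith [ht.1]))

theorem exp_mul_chiSqLeading_le_chiSqCDF (hd : 0 < d) (hx : 0 ≤ x) :
    exp (-x / 2) * chiSqLeading d x ≤ chiSqCDF d x := by
  rw [chiSqCDF_eq_integral_div, chiSqLeading_eq_integral_div hd, mul_div_assoc',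
    ← intervalIntegral.integral_const_mul]
  have : 0 < Gamma (d / 2) := Gamma_pos_of_pos (by positivity)
  gcongr
  refine intervalIntegral.integral_mono_on hx
    ((intervalIntegral.intervalIntegrable_rpow' (by linarith)).const_mul _)
    (intervalIntegrable_chiSqDensity hd x) fun t ht => ?_
  rw [mul_comm (t ^ _)]
  exact mul_le_mul_of_nonneg_right (exp_le_exp.2 (by linarith [ht.2])) (rpow_nonneg ht.1 _)

theorem chiSqCDF_monotoneOn (hd : 0 < d) : MonotoneOn (chiSqCDF d) (Ici 0) := by
  intro x hx y _ hxy
  have : 0 < Gamma (d / 2) := Gamma_pos_of_pos (by positivity)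
  refine intervalIntegral.integral_mono_interval le_rfl hx hxy ?_
    ((intervalIntegrable_chiSqDensity hd y).div_const _)
  filter_upwards [ae_restrict_mem measurableSet_Ioc] with t ht
  have := ht.1.le
  positivity

theorem chiSqCDF_nonneg (hd : 0 < d) (hx : 0 ≤ x) : 0 ≤ chiSqCDF d x := by
  simpa [chiSqCDF] using chiSqCDF_monotoneOn hd self_mem_Ici hx hx

theorem chiSqLeading_add_two_mul_le (hd : 0 < d) (hx : 0 ≤ x) (k : ℕ) :
    chiSqLeading (d + 2 * k) x ≤ chiSqLeading d x * (x / 2) ^ k := by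
  have hk : (d + 2 * k) / 2 = d / 2 + k := by ring
  have hΓ := Gamma_le_Gamma_add_nat (by linarith : 1 ≤ d / 2 + 1) k
  have : 0 < Gamma (d / 2 + 1) := Gamma_pos_of_pos (by positivity)
  calc chiSqLeading (d + 2 * k) x
      = x ^ (d / 2) * x ^ k / (2 ^ (d / 2) * 2 ^ k * Gamma (d / 2 + 1 + k)) := by
        rw [chiSqLeading, hk, rpow_add' hx (by positivity), rpow_add two_pos, rpow_natCast,
          rpow_natCast, add_right_comm]
    _ ≤ x ^ (d / 2) * x ^ k / (2 ^ (d / 2) * 2 ^ k * Gamma (d / 2 + 1)) := by gcongr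
    _ = chiSqLeading d x * (x / 2) ^ k := by rw [chiSqLeading, div_pow]; ring

end ChiSq

section NonCentral

variable {p : ℕ} {lam x : ℝ}

theorem ncChiSqTerm_nonneg (hp : 0 < p) (hlam : 0 ≤ lam) (hx : 0 ≤ x) (k : ℕ) :
    0 ≤ exp (-lam / 2) * (lam / 2) ^ k / (Nat.factorial k) * chiSqCDF (p + 2 * k) x := by
  have := chiSqCDF_nonneg (d := p + 2 * k) (by positivity) hx
  positivity

theorem ncChiSqTerm_le (hp : 0 < p) (hlam : 0 ≤ lam) (hx : 0 ≤ x) (k : ℕ) :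
    exp (-lam / 2) * (lam / 2) ^ k / (Nat.factorial k) * chiSqCDF (p + 2 * k) x ≤
      exp (-lam / 2) * chiSqLeading p x * ((lam * x / 4) ^ k / (Nat.factorial k)) := by
  have hp' : (0 : ℝ) < p := by exact_mod_cast hp
  calc _ ≤ exp (-lam / 2) * (lam / 2) ^ k / (Nat.factorial k) *
          (chiSqLeading p x * (x / 2) ^ k) := by
        gcongr
        exact (chiSqCDF_le_chiSqLeading (by positivity) hx).trans
          (chiSqLeading_add_two_mul_le hp' hx k)
    _ = _ := by rw [show lam * x / 4 = lam / 2 * (x / 2) by ring, mul_pow]; ring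

theorem summable_ncChiSqTerm (hp : 0 < p) (hlam : 0 ≤ lam) (hx : 0 ≤ x) :
    Summable fun k : ℕ => exp (-lam / 2) * (lam / 2) ^ k / (Nat.factorial k) *
      chiSqCDF (p + 2 * k) x :=
  .of_nonneg_of_le (ncChiSqTerm_nonneg hp hlam hx) (ncChiSqTerm_le hp hlam hx)
    ((summable_pow_div_factorial _).mul_left _)

theorem ncChiSqCDF_le_mul_exp (hp : 0 < p) (hlam : 0 ≤ lam) (hx : 0 ≤ x) :
    ncChiSqCDF p lam x ≤ exp (-lam / 2) * chiSqLeading p x * exp (lam * x / 4) := by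
  have hexp := NormedSpace.expSeries_div_hasSum_exp (lam * x / 4)
  rw [← congrFun exp_eq_exp_ℝ] at hexp
  exact hasSum_le (ncChiSqTerm_le hp hlam hx) (summable_ncChiSqTerm hp hlam hx).hasSum
    (hexp.mul_left _)

theorem exp_mul_chiSqCDF_le_ncChiSqCDF (hp : 0 < p) (hlam : 0 ≤ lam) (hx : 0 ≤ x) :
    exp (-lam / 2) * chiSqCDF p x ≤ ncChiSqCDF p lam x := by
  simpa [ncChiSqCDF] using (summable_ncChiSqTerm hp hlam hx).le_tsum 0 fun k _ =>
    ncChiSqTerm_nonneg hp hlam hx k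

theorem exp_mul_chiSqLeading_le_ncChiSqCDF (hp : 0 < p) (hlam : 0 ≤ lam) (hx : 0 ≤ x) :
    exp (-x / 2) * (exp (-lam / 2) * chiSqLeading p x) ≤ ncChiSqCDF p lam x :=
  calc exp (-x / 2) * (exp (-lam / 2) * chiSqLeading p x)
      = exp (-lam / 2) * (exp (-x / 2) * chiSqLeading p x) := by ring
    _ ≤ exp (-lam / 2) * chiSqCDF p x := by
      gcongr; exact exp_mul_chiSqLeading_le_chiSqCDF (by exact_mod_cast hp) hx
    _ ≤ ncChiSqCDF p lam x := exp_mul_chiSqCDF_le_ncChiSqCDF hp hlam hx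

theorem ncChiSqCDF_pos (hp : 0 < p) (hlam : 0 ≤ lam) (hx : 0 < x) : 0 < ncChiSqCDF p lam x := by
  have := chiSqLeading_pos (d := p) (by exact_mod_cast hp) hx
  exact lt_of_lt_of_le (by positivity) (exp_mul_chiSqLeading_le_ncChiSqCDF hp hlam hx.le)

theorem ncChiSqCDF_monotoneOn (hp : 0 < p) (hlam : 0 ≤ lam) :
    MonotoneOn (ncChiSqCDF p lam) (Ici 0) := by
  intro x hx y hy hxy
  refine Summable.tsum_le_tsum (fun k => ?_) (summable_ncChiSqTerm hp hlam hx)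
    (summable_ncChiSqTerm hp hlam hy)
  have hd : (0 : ℝ) < p + 2 * k := by positivity
  gcongr
  exact chiSqCDF_monotoneOn hd hx hy hxy

theorem tendsto_ncChiSqCDF_div_chiSqLeading (hp : 0 < p) (hlam : 0 ≤ lam) :
    Tendsto (fun x => ncChiSqCDF p lam x / (exp (-lam / 2) * chiSqLeading p x))
      (𝓝[>] 0) (𝓝 1) := by
  have hp' : (0 : ℝ) < p := by exact_mod_cast hp
  have hlo : Tendsto (fun x : ℝ => exp (-x / 2)) (𝓝[>] 0) (𝓝 1) :=
    ((by fun_prop : Continuous fun x : ℝ => exp (-x / 2)).tendsto' 0 1 (by simp)).mono_left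
      nhdsWithin_le_nhds
  have hhi : Tendsto (fun x : ℝ => exp (lam * x / 4)) (𝓝[>] 0) (𝓝 1) :=
    ((by fun_prop : Continuous fun x : ℝ => exp (lam * x / 4)).tendsto' 0 1 (by simp)).mono_left
      nhdsWithin_le_nhds
  refine tendsto_of_tendsto_of_tendsto_of_le_of_le' hlo hhi ?_ ?_ <;>
    filter_upwards [self_mem_nhdsWithin] with x (hx : 0 < x) <;>
    have := chiSqLeading_pos hp' hx
  · rw [le_div_iff₀ (by positivity)]
    exact exp_mul_chiSqLeading_le_ncChiSqCDF hp hlam hx.le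
  · rw [div_le_iff₀ (by positivity), mul_comm (exp _)]
    exact ncChiSqCDF_le_mul_exp hp hlam hx.le

end NonCentral

section Quantile

variable {F a : ℝ → ℝ}

theorem tendsto_nhdsGT_zero_of_apply_eq_inv (hF : MonotoneOn F (Ioi 0))
    (hFpos : ∀ x, 0 < x → 0 < F x) (ha : ∀ᶠ s in atTop, 0 < a s ∧ F (a s) = s⁻¹) :
    Tendsto a atTop (𝓝[>] 0) := by
  refine tendsto_nhdsWithin_iff.2 ⟨?_, ha.mono fun s hs => hs.1⟩
  refine tendsto_order.2 ⟨fun b hb => ha.mono fun s hs => hb.trans hs.1, fun ε hε => ?_⟩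
  have hFε := hFpos ε hε
  filter_upwards [ha, eventually_gt_atTop (F ε)⁻¹] with s ⟨has, hFs⟩ hs
  by_contra! hεs
  have hs' : s⁻¹ < F ε := (inv_lt_comm₀ hFε ((inv_pos.2 hFε).trans hs)).1 hs
  exact hs'.not_ge (hFs ▸ hF hε has hεs)

theorem tendsto_div_rpow_of_apply_eq_inv {K r : ℝ} (hK : 0 < K) (hr : 0 < r)
    (hF : Tendsto (fun x => F x / (x ^ r / K)) (𝓝[>] 0) (𝓝 1))
    (ha0 : Tendsto a atTop (𝓝[>] 0)) (ha : ∀ᶠ s in atTop, F (a s) = s⁻¹) :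
    Tendsto (fun s => a s / (s⁻¹ * K) ^ r⁻¹) atTop (𝓝 1) := by
  have h := (hF.comp ha0).rpow_const (p := -r⁻¹) (Or.inl one_ne_zero)
  rw [one_rpow] at h
  refine h.congr' ?_
  filter_upwards [ha, ha0 self_mem_nhdsWithin, eventually_gt_atTop 0] with s hFs (has : 0 < a s) hs
  simp only [Function.comp_apply, hFs]
  rw [div_div_eq_mul_div, rpow_neg (by positivity), ← inv_rpow (by positivity), inv_div,
    div_rpow (by positivity) (by positivity), rpow_rpow_inv has.le hr.ne']

end Quantile

/-- If `a(s)` is the `1/s`-quantile of `χ²_p(λ)`, then as `s ↑ ∞`,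
`a(s) ~ (s⁻¹ e^{λ/2} 2^{p/2} Γ(p/2+1))^{2/p}`. -/
theorem quantile_asymptotic (p : ℕ) (hp : 1 ≤ p) (lam : ℝ) (hlam : 0 ≤ lam)
    (a : ℝ → ℝ)
    (ha : ∀ s : ℝ, 1 < s → 0 < a s ∧ ncChiSqCDF p lam (a s) = 1/s) :
    Tendsto (fun s : ℝ =>
        a s / (s⁻¹ * Real.exp (lam/2) * 2 ^ ((p : ℝ)/2) * Real.Gamma ((p : ℝ)/2 + 1))
          ^ (2/(p : ℝ)))
      atTop (nhds 1) := by
  have hp' : (0 : ℝ) < p := by exact_mod_cast hp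
  have hev : ∀ᶠ s in atTop, 0 < a s ∧ ncChiSqCDF p lam (a s) = s⁻¹ :=
    (eventually_gt_atTop 1).mono fun s hs => by simpa only [one_div] using ha s hs
  have hK : 0 < exp (lam / 2) * 2 ^ ((p : ℝ) / 2) * Gamma ((p : ℝ) / 2 + 1) := by
    have := Gamma_pos_of_pos (by positivity : 0 < (p : ℝ) / 2 + 1)
    positivity
  have hF : Tendsto (fun x => ncChiSqCDF p lam x /
      (x ^ ((p : ℝ) / 2) / (exp (lam / 2) * 2 ^ ((p : ℝ) / 2) * Gamma ((p : ℝ) / 2 + 1))))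
      (𝓝[>] 0) (𝓝 1) := by
    convert tendsto_ncChiSqCDF_div_chiSqLeading hp hlam using 3 with x
    rw [chiSqLeading, neg_div, exp_neg]
    field_simp
  have ha0 := tendsto_nhdsGT_zero_of_apply_eq_inv
    ((ncChiSqCDF_monotoneOn hp hlam).mono Ioi_subset_Ici_self)
    (fun x hx => ncChiSqCDF_pos hp hlam hx) hev
  convert tendsto_div_rpow_of_apply_eq_inv hK (by positivity) hF ha0 (hev.mono fun s hs => hs.2)
    using 3 with s
  rw [inv_div, ← mul_assoc, ← mul_assoc]
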